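/- arXiv:1501.02952 — 2 statements merged into one kernel-verified Lean document; each statement's English description precedes it below -/
import Mathlib

section
/- With σ : (0,b] → [0,∞) the inverse of the restriction of η to [0,∞), one has lim_{t→b⁻} |η'(σ(t))|/√(b − t) = √(8bθ₀(π−θ₀)/3); in particular this limit exists and is a nonzero constant. -/
open Real Filter Topology Set

/-- The symbol `η(s) = sinh(s(π−2θ₀))/(2 sinh(sπ))` for `s ≠ 0`, with `η(0) = b = 1/2 − θ₀/π`. -/
noncomputable def eta (θ₀ : ℝ) (s : ℝ) : ℝ :=
  if s = 0 then 1 / 2 - θ₀ / π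
  else Real.sinh (s * (π - 2 * θ₀)) / (2 * Real.sinh (s * π))

/-!
Near `s = 0`, both `η'(s)` and `b - η(s)` are elementary multiples of expressions
`v sinh(us) - u sinh(vs)`, which the cubic Taylor polynomial of `sinh` shows to be
`uv(u² - v²)s³/6 + o(s³)`; hence `η'(s)² / (b - η(s)) → 8bθ₀(π - θ₀)/3` as `s → 0⁺`.
Strict convexity of `sinh` on `[0, ∞)` makes `η` strictly decreasing there with `η < b` off `0`,
so `σ(t) → 0⁺` as `t → b⁻`, and the limit transfers along `σ`.
-/

open Asymptotics

lemma abs_exp_sub_taylor_le {x : ℝ} (hx : |x| ≤ 1) :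
    |exp x - (1 + x + x ^ 2 / 2 + x ^ 3 / 6)| ≤ |x| ^ 4 * (5 / 96) := by
  have h := exp_bound hx (n := 4) (by norm_num)
  simp only [Finset.sum_range_succ, Finset.sum_range_zero] at h
  convert h using 2 <;> norm_num [Nat.factorial]

lemma abs_sinh_sub_taylor_le {x : ℝ} (hx : |x| ≤ 1) : |sinh x - (x + x ^ 3 / 6)| ≤ |x| ^ 4 := by
  have hpos := abs_exp_sub_taylor_le hx
  have hneg := abs_exp_sub_taylor_le (x := -x) (by rwa [abs_neg])
  rw [abs_neg] at hneg
  have h : sinh x - (x + x ^ 3 / 6) = ((exp x - (1 + x + x ^ 2 / 2 + x ^ 3 / 6)) -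
      (exp (-x) - (1 + -x + (-x) ^ 2 / 2 + (-x) ^ 3 / 6))) / 2 := by
    rw [sinh_eq]; ring
  rw [h, abs_div, abs_two, div_le_iff₀ two_pos]
  linarith [abs_sub (exp x - (1 + x + x ^ 2 / 2 + x ^ 3 / 6))
    (exp (-x) - (1 + -x + (-x) ^ 2 / 2 + (-x) ^ 3 / 6)), pow_nonneg (abs_nonneg x) 4]

lemma sinh_sub_taylor_isBigO : (fun x => sinh x - (x + x ^ 3 / 6)) =O[𝓝 0] fun x => x ^ 4 := by
  refine IsBigO.of_bound 1 ?_
  filter_upwards [Metric.closedBall_mem_nhds (0 : ℝ) one_pos] with x hx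
  rw [Metric.mem_closedBall, dist_zero_right, Real.norm_eq_abs] at hx
  simpa [norm_pow] using abs_sinh_sub_taylor_le hx

lemma tendsto_sinh_combination_div_cube (u v : ℝ) :
    Tendsto (fun s => (v * sinh (u * s) - u * sinh (v * s)) / s ^ 3) (𝓝[≠] 0)
      (𝓝 (u * v * (u ^ 2 - v ^ 2) / 6)) := by
  set R := fun x : ℝ => sinh x - (x + x ^ 3 / 6) with hR
  have hRo : ∀ c : ℝ, (fun s => R (c * s)) =o[𝓝 0] fun s => s ^ 3 := by
    intro c
    have hc : Tendsto (fun s : ℝ => c * s) (𝓝 0) (𝓝 0) := by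
      simpa using (continuous_const_mul c).tendsto 0
    refine (sinh_sub_taylor_isBigO.comp_tendsto hc).trans_isLittleO ?_
    simpa only [Function.comp_def, mul_pow] using
      (isLittleO_pow_pow (𝕜 := ℝ) (by norm_num : 3 < 4)).const_mul_left (c ^ 4)
  have herr := (((hRo u).const_mul_left v).sub ((hRo v).const_mul_left u)).tendsto_div_nhds_zero
  have := (herr.mono_left (nhdsWithin_le_nhds (s := {0}ᶜ))).const_add (u * v * (u ^ 2 - v ^ 2) / 6)
  rw [add_zero] at this
  refine this.congr' ?_
  filter_upwards [self_mem_nhdsWithin] with s (hs : s ≠ 0)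
  simp only [hR]
  field_simp
  ring

lemma tendsto_sinh_mul_div (u : ℝ) : Tendsto (fun s => sinh (u * s) / s) (𝓝[≠] 0) (𝓝 u) := by
  have h : HasDerivAt (fun s => sinh (u * s)) u 0 := by
    simpa using ((hasDerivAt_id (0 : ℝ)).const_mul u).sinh
  rw [hasDerivAt_iff_tendsto_slope_zero] at h
  simpa [div_eq_inv_mul] using h

lemma strictConvexOn_sinh : StrictConvexOn ℝ (Ici 0) sinh :=
  strictConvexOn_of_deriv2_pos (convex_Ici 0) continuous_sinh.continuousOn fun x hx => by
    rw [interior_Ici] at hx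
    simpa [Real.deriv_sinh, Real.deriv_cosh] using sinh_pos_iff.2 hx

lemma mul_sinh_mul_lt_mul_sinh_mul {u v s : ℝ} (hu : 0 < u) (huv : u < v) (hs : 0 < s) :
    v * sinh (u * s) < u * sinh (v * s) := by
  have hus : 0 < u * s := mul_pos hu hs
  have hvs : 0 < v * s := mul_pos (hu.trans huv) hs
  have h := strictConvexOn_sinh.secant_strict_mono (a := 0) self_mem_Ici hus.le hvs.le
    hus.ne' hvs.ne' (mul_lt_mul_of_pos_right huv hs)
  simp only [sinh_zero, sub_zero] at h
  rw [div_lt_div_iff₀ hus hvs] at h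
  nlinarith

lemma eta_of_ne_zero (θ₀ : ℝ) {s : ℝ} (hs : s ≠ 0) :
    eta θ₀ s = sinh ((π - 2 * θ₀) * s) / (2 * sinh (π * s)) := by
  simp [eta, hs, mul_comm]

lemma sub_eta_of_ne_zero (θ₀ : ℝ) {s : ℝ} (hs : s ≠ 0) :
    1 / 2 - θ₀ / π - eta θ₀ s =
      ((π - 2 * θ₀) * sinh (π * s) - π * sinh ((π - 2 * θ₀) * s)) / (2 * π * sinh (π * s)) := by
  have hS : sinh (π * s) ≠ 0 := sinh_ne_zero.2 (mul_ne_zero pi_ne_zero hs)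
  rw [eta_of_ne_zero θ₀ hs]
  field_simp

lemma hasDerivAt_eta (θ₀ : ℝ) {s : ℝ} (hs : s ≠ 0) :
    HasDerivAt (eta θ₀)
      (((π - θ₀) * sinh (2 * θ₀ * s) - θ₀ * sinh (2 * (π - θ₀) * s)) / (2 * sinh (π * s) ^ 2))
      s := by
  have hS : sinh (π * s) ≠ 0 := sinh_ne_zero.2 (mul_ne_zero pi_ne_zero hs)
  have hquot := (((hasDerivAt_id s).const_mul (π - 2 * θ₀)).sinh).div
    (((hasDerivAt_id s).const_mul π).sinh.const_mul 2) (mul_ne_zero two_ne_zero hS)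
  simp only [id] at hquot
  have heq : eta θ₀ =ᶠ[𝓝 s] fun x => sinh ((π - 2 * θ₀) * x) / (2 * sinh (π * x)) := by
    filter_upwards [eventually_ne_nhds hs] with x hx using eta_of_ne_zero θ₀ hx
  refine (hquot.congr_of_eventuallyEq heq).congr_deriv ?_
  rw [show 2 * θ₀ * s = π * s - (π - 2 * θ₀) * s by ring,
    show 2 * (π - θ₀) * s = π * s + (π - 2 * θ₀) * s by ring, sinh_sub, sinh_add]
  field_simp
  ring

lemma half_sub_div_pi_pos {θ₀ : ℝ} (h1 : θ₀ < π / 2) : 0 < 1 / 2 - θ₀ / π := by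
  rw [sub_pos, div_lt_iff₀ pi_pos]
  linarith

section

variable {θ₀ : ℝ} (h0 : 0 < θ₀) (h1 : θ₀ < π / 2)
include h0 h1

lemma sub_eta_pos {s : ℝ} (hs : 0 < s) : 0 < 1 / 2 - θ₀ / π - eta θ₀ s := by
  rw [sub_eta_of_ne_zero θ₀ hs.ne']
  have := mul_sinh_mul_lt_mul_sinh_mul (s := s) (by linarith : 0 < π - 2 * θ₀)
    (by linarith : π - 2 * θ₀ < π) hs
  have : 0 < sinh (π * s) := sinh_pos_iff.2 (by positivity)
  apply div_pos <;> nlinarith [pi_pos]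

lemma strictAntiOn_eta : StrictAntiOn (eta θ₀) (Ioi 0) := by
  refine strictAntiOn_of_deriv_neg (convex_Ioi 0)
    (fun s hs => (hasDerivAt_eta θ₀ (ne_of_gt hs)).continuousAt.continuousWithinAt) ?_
  intro s hs
  rw [interior_Ioi, mem_Ioi] at hs
  rw [(hasDerivAt_eta θ₀ (ne_of_gt hs)).deriv]
  have := mul_sinh_mul_lt_mul_sinh_mul (s := s) (by linarith : 0 < 2 * θ₀)
    (by linarith : 2 * θ₀ < 2 * (π - θ₀)) hs
  have : 0 < sinh (π * s) := sinh_pos_iff.2 (by positivity)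
  apply div_neg_of_neg_of_pos <;> nlinarith

lemma tendsto_deriv_eta_sq_div_sub_eta :
    Tendsto (fun s => deriv (eta θ₀) s ^ 2 / (1 / 2 - θ₀ / π - eta θ₀ s)) (𝓝[>] 0)
      (𝓝 (8 * (1 / 2 - θ₀ / π) * θ₀ * (π - θ₀) / 3)) := by
  have hGT : 𝓝[>] (0 : ℝ) ≤ 𝓝[≠] 0 := nhdsWithin_mono _ fun s hs => ne_of_gt hs
  have hN₁ := (tendsto_sinh_combination_div_cube (2 * θ₀) (2 * (π - θ₀))).mono_left hGT
  have hN₂ := (tendsto_sinh_combination_div_cube π (π - 2 * θ₀)).mono_left hGT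
  have hS := (tendsto_sinh_mul_div π).mono_left hGT
  have hL₂ : 0 < π * (π - 2 * θ₀) * (π ^ 2 - (π - 2 * θ₀) ^ 2) / 6 := by
    have : 0 < π - 2 * θ₀ := by linarith
    have : 0 < π ^ 2 - (π - 2 * θ₀) ^ 2 := by nlinarith
    positivity
  -- for `s > 0` the quotient is `π N₁² / (8 (sinh(πs)/s)³ N₂)`, `N₁`, `N₂` as in `hN₁`, `hN₂`
  have hlim := ((hN₁.pow 2).const_mul π).div ((hS.pow 3).const_mul 8 |>.mul hN₂)
    (mul_ne_zero (by positivity) hL₂.ne')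
  convert hlim.congr' ?_ using 2
  · rw [eq_div_iff (mul_ne_zero (by positivity) hL₂.ne')]
    field_simp
    ring
  filter_upwards [self_mem_nhdsWithin] with s (hs : 0 < s)
  simp only [Pi.div_apply]
  have hsinh : sinh (π * s) ≠ 0 := (sinh_pos_iff.2 (by positivity)).ne'
  have hsub := sub_eta_pos h0 h1 hs
  rw [sub_eta_of_ne_zero θ₀ hs.ne'] at hsub ⊢
  rw [(hasDerivAt_eta θ₀ hs.ne').deriv]
  have hN₂pos : (π - 2 * θ₀) * sinh (π * s) - π * sinh ((π - 2 * θ₀) * s) ≠ 0 := by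
    intro h; rw [h, zero_div] at hsub; exact hsub.false
  field_simp
  ring

lemma tendsto_nhdsGT_of_eta_rightInverse {σ : ℝ → ℝ}
    (hσ : ∀ t : ℝ, 0 < t → t ≤ 1 / 2 - θ₀ / π → 0 ≤ σ t ∧ eta θ₀ (σ t) = t) :
    Tendsto σ (𝓝[<] (1 / 2 - θ₀ / π)) (𝓝[>] 0) := by
  have hσ' : ∀ᶠ t in 𝓝[<] (1 / 2 - θ₀ / π), 0 < σ t ∧ eta θ₀ (σ t) = t := by
    filter_upwards [Ioo_mem_nhdsLT (half_sub_div_pi_pos h1)] with t ⟨ht0, htb⟩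
    obtain ⟨hσ0, hη⟩ := hσ t ht0 htb.le
    refine ⟨hσ0.lt_of_ne fun h => htb.ne' ?_, hη⟩
    rw [← hη, ← h, eta, if_pos rfl]
  refine tendsto_nhdsWithin_iff.2 ⟨tendsto_order.2 ⟨fun a ha => ?_, fun ε hε => ?_⟩,
    hσ'.mono fun t ht => ht.1⟩
  · exact hσ'.mono fun t ht => ha.trans ht.1
  · filter_upwards [hσ', Ioo_mem_nhdsLT (sub_pos.1 (sub_eta_pos h0 h1 hε))]
      with t ⟨hσt, hηt⟩ ⟨hεt, _⟩
    by_contra! hle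
    have := (strictAntiOn_eta h0 h1).antitoneOn hε hσt hle
    linarith

end

/-- with `σ` the inverse on `(0,b]` of the restriction of `η` to `[0,∞)`,
`lim_{t→b⁻} |η'(σ(t))|/√(b−t) = √(8bθ₀(π−θ₀)/3)`, a nonzero constant
(`b = 1/2 − θ₀/π`). -/
theorem statement8 (θ₀ : ℝ) (h0 : 0 < θ₀) (h1 : θ₀ < π / 2) (σ : ℝ → ℝ)
    (hσ : ∀ t : ℝ, 0 < t → t ≤ 1 / 2 - θ₀ / π → 0 ≤ σ t ∧ eta θ₀ (σ t) = t) :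
    Real.sqrt (8 * (1 / 2 - θ₀ / π) * θ₀ * (π - θ₀) / 3) ≠ 0 ∧
    Tendsto (fun t : ℝ => |deriv (eta θ₀) (σ t)| / Real.sqrt ((1 / 2 - θ₀ / π) - t))
      (𝓝[<] (1 / 2 - θ₀ / π))
      (𝓝 (Real.sqrt (8 * (1 / 2 - θ₀ / π) * θ₀ * (π - θ₀) / 3))) := by
  have hc : 0 < 8 * (1 / 2 - θ₀ / π) * θ₀ * (π - θ₀) / 3 := by
    have := half_sub_div_pi_pos h1
    have : 0 < π - θ₀ := by linarith
    positivity
  refine ⟨(sqrt_pos.2 hc).ne', ?_⟩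
  have hF : Tendsto (fun s => |deriv (eta θ₀) s| / √(1 / 2 - θ₀ / π - eta θ₀ s)) (𝓝[>] 0)
      (𝓝 √(8 * (1 / 2 - θ₀ / π) * θ₀ * (π - θ₀) / 3)) := by
    refine (tendsto_deriv_eta_sq_div_sub_eta h0 h1).sqrt.congr fun s => ?_
    rw [sqrt_div (sq_nonneg _), sqrt_sq_eq_abs]
  refine (hF.comp (tendsto_nhdsGT_of_eta_rightInverse h0 h1 hσ)).congr' ?_
  filter_upwards [Ioo_mem_nhdsLT (half_sub_div_pi_pos h1)] with t ⟨ht0, htb⟩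
  rw [Function.comp_apply, (hσ t ht0 htb.le).2]
end

section
/- The operator 𝕂* defined by 𝕂*(f₁, f₂) = (η·f₁, −η·f₂) is a well-defined bounded linear operator on W*, it is self-adjoint with respect to the inner product ⟨·,·⟩_{W*} (i.e. ⟨𝕂*f, g⟩_{W*} = ⟨f, 𝕂*g⟩_{W*} for all f, g ∈ W*), and its operator norm equals b = 1/2 − θ₀/π. -/
open Real Filter Topology Set MeasureTheory
open scoped ComplexInnerProductSpace

/-- The weight `p₁`. -/
noncomputable def p1 (θ₀ : ℝ) (s : ℝ) : ℝ :=
  if s = 0 then θ₀ * (π - θ₀) / π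
  else Real.sinh (s * θ₀) * Real.sinh (s * (π - θ₀)) / (s * Real.sinh (s * π))

/-- The weight `p₂`. -/
noncomputable def p2 (θ₀ : ℝ) (s : ℝ) : ℝ :=
  Real.cosh (s * θ₀) * Real.cosh (s * (π - θ₀)) / (s * Real.sinh (s * π))

/-- The measure `p₁(s) ds`. -/
noncomputable def mu1 (θ₀ : ℝ) : Measure ℝ :=
  (volume : Measure ℝ).withDensity fun s => ENNReal.ofReal (p1 θ₀ s)

/-- The measure `p₂(s) ds`. -/
noncomputable def mu2 (θ₀ : ℝ) : Measure ℝ :=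
  (volume : Measure ℝ).withDensity fun s => ENNReal.ofReal (p2 θ₀ s)

/-- The Hilbert space `W* = L²(ℝ, p₁ ds) ⊕ L²(ℝ, p₂ ds)` (ℓ²-direct sum). -/
noncomputable abbrev WStar (θ₀ : ℝ) :=
  WithLp 2 (Lp ℂ 2 (mu1 θ₀) × Lp ℂ 2 (mu2 θ₀))

/-- First component of an element of `W*`. -/
noncomputable def comp1 {θ₀ : ℝ} (f : WStar θ₀) : Lp ℂ 2 (mu1 θ₀) :=
  (WithLp.equiv 2 (Lp ℂ 2 (mu1 θ₀) × Lp ℂ 2 (mu2 θ₀)) f).1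

/-- Second component of an element of `W*`. -/
noncomputable def comp2 {θ₀ : ℝ} (f : WStar θ₀) : Lp ℂ 2 (mu2 θ₀) :=
  (WithLp.equiv 2 (Lp ℂ 2 (mu1 θ₀) × Lp ℂ 2 (mu2 θ₀)) f).2

/-- `T` acts as `𝕂*(f₁, f₂) = (η·f₁, −η·f₂)`. -/
def IsNPMult (θ₀ : ℝ) (T : WStar θ₀ →L[ℂ] WStar θ₀) : Prop :=
  ∀ f : WStar θ₀,
    (comp1 (T f) : ℝ → ℂ) =ᵐ[mu1 θ₀] (fun s => (eta θ₀ s : ℂ) * (comp1 f : ℝ → ℂ) s) ∧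
    (comp2 (T f) : ℝ → ℂ) =ᵐ[mu2 θ₀] (fun s => -(eta θ₀ s : ℂ) * (comp2 f : ℝ → ℂ) s)

open scoped ENNReal

/-! `𝕂*` is the `ℓ²`-direct sum of the multiplication operators by `η` on `L²(p₁ ds)` and by `-η`
on `L²(p₂ ds)`. Both are symmetric because `η` is real, and the norm of the direct sum is at most
the larger of the two norms, hence at most `sup |η|`. Convexity of `sinh` makes `sinh x / x`
increasing, which gives `|η| ≤ b`. Conversely `η(s) ≥ b / cosh (π s)` for `s > 0` and `p₁ > 0`
there, so testing on indicators of intervals `(0, δ)` gives `‖𝕂*‖ ≥ b / cosh (π δ) → b`. -/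

lemma convexOn_sinh : ConvexOn ℝ (Ici 0) sinh := by
  refine convexOn_of_deriv2_nonneg (convex_Ici 0) continuous_sinh.continuousOn
    differentiable_sinh.differentiableOn ?_ fun x hx => ?_
  · simpa only [Real.deriv_sinh] using differentiable_cosh.differentiableOn
  · rw [interior_Ici] at hx
    simpa [Real.deriv_sinh, Real.deriv_cosh] using hx.le

lemma sinh_le_mul_cosh {x : ℝ} (hx : 0 ≤ x) : sinh x ≤ x * cosh x := by
  rcases hx.eq_or_lt with rfl | hx
  · simp
  have h := convexOn_sinh.slope_le_of_hasDerivAt self_mem_Ici hx.le hx (hasDerivAt_sinh x)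
  rwa [slope_def_field, sinh_zero, sub_zero, sub_zero, div_le_iff₀ hx, mul_comm] at h

lemma mul_sinh_le_mul_sinh {a c : ℝ} (ha : 0 ≤ a) (hac : a ≤ c) : c * sinh a ≤ a * sinh c := by
  rcases ha.eq_or_lt with rfl | ha
  · simp
  have h := convexOn_sinh.secant_mono (a := 0) self_mem_Ici ha.le (ha.le.trans hac) ha.ne'
    (ha.trans_le hac).ne' hac
  simp only [sinh_zero, sub_zero] at h
  rw [div_le_div_iff₀ ha (ha.trans_le hac)] at h
  linarith

section MulOp
variable {α : Type*} [MeasurableSpace α] {μ : Measure α}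

lemma exists_Lp_top_ofReal [Nonempty α] {r : α → ℝ} (hr : Measurable r) {C : ℝ}
    (hC : ∀ x, |r x| ≤ C) :
    ∃ g : Lp ℂ ∞ μ, g =ᵐ[μ] (fun x => (r x : ℂ)) ∧ ‖g‖ ≤ C := by
  have hbound : ∀ᵐ x ∂μ, ‖(r x : ℂ)‖ ≤ C := ae_of_all _ fun x => by simpa using hC x
  have hmem : MemLp (fun x => (r x : ℂ)) ∞ μ :=
    memLp_top_of_bound (by fun_prop) C hbound
  refine ⟨hmem.toLp _, hmem.coeFn_toLp, ?_⟩
  rw [Lp.norm_toLp, eLpNorm_exponent_top]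
  exact ENNReal.toReal_le_of_le_ofReal ((abs_nonneg _).trans (hC (Classical.arbitrary α)))
    (eLpNormEssSup_le_of_ae_bound hbound)

noncomputable def mulOp (g : Lp ℂ ∞ μ) : Lp ℂ 2 μ →L[ℂ] Lp ℂ 2 μ :=
  LinearMap.mkContinuous
    { toFun := fun f => g • f
      map_add' := fun f f' => Lp.add_smul g f f'
      map_smul' := fun c f => (Lp.smul_comm c g f).symm }
    ‖g‖ fun f => Lp.norm_smul_le g f

lemma mulOp_apply_ae (g : Lp ℂ ∞ μ) (f : Lp ℂ 2 μ) : mulOp g f =ᵐ[μ] fun x => g x * f x :=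
  Lp.coeFn_lpSMul g f

lemma opNorm_mulOp_le (g : Lp ℂ ∞ μ) : ‖mulOp g‖ ≤ ‖g‖ :=
  LinearMap.mkContinuous_norm_le _ (norm_nonneg g) _

lemma isSymmetric_mulOp {g : Lp ℂ ∞ μ} {r : α → ℝ} (hg : g =ᵐ[μ] fun x => (r x : ℂ)) :
    (mulOp g : Lp ℂ 2 μ →ₗ[ℂ] Lp ℂ 2 μ).IsSymmetric := by
  intro u v
  simp only [ContinuousLinearMap.coe_coe, L2.inner_def]
  refine integral_congr_ae ?_
  filter_upwards [hg, mulOp_apply_ae g u, mulOp_apply_ae g v] with x hgx hu hv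
  simp only [hu, hv, RCLike.inner_apply, map_mul, hgx, Complex.conj_ofReal]
  ring

lemma le_opNorm_mulOp [SigmaFinite μ] {g : Lp ℂ ∞ μ} {S : Set α} {c : ℝ}
    (hS : MeasurableSet S) (hμS : 0 < μ S) (hc : ∀ᵐ x ∂μ, x ∈ S → c ≤ ‖g x‖) :
    c ≤ ‖mulOp g‖ := by
  rcases le_or_gt c 0 with hc0 | hc0
  · exact hc0.trans (norm_nonneg _)
  obtain ⟨t, ht, htS, hμt, hμt'⟩ := Measure.exists_subset_measure_lt_top hS hμS
  set f := indicatorConstLp 2 ht hμt'.ne (1 : ℂ)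
  have hf : 0 < ‖f‖ := by
    rw [norm_indicatorConstLp two_ne_zero ENNReal.ofNat_ne_top, norm_one, one_mul]
    exact Real.rpow_pos_of_pos (ENNReal.toReal_pos hμt.ne' hμt'.ne) _
  have hcf : ‖(c : ℂ) • f‖ ≤ ‖mulOp g f‖ := by
    refine Lp.norm_le_norm_of_ae_le ?_
    filter_upwards [hc, Lp.coeFn_smul (c : ℂ) f, mulOp_apply_ae g f,
      indicatorConstLp_coeFn (hs := ht) (hμs := hμt'.ne) (c := (1 : ℂ))] with x hcx hsmul hg hf
    rw [hsmul, hg, Pi.smul_apply, hf]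
    by_cases hx : x ∈ t
    · simp [hx, abs_of_pos hc0, hcx (htS hx)]
    · simp [hx]
  rw [norm_smul, Complex.norm_real, Real.norm_of_nonneg hc0.le] at hcf
  exact le_of_mul_le_mul_right (hcf.trans ((mulOp g).le_opNorm f)) hf

end MulOp

section L2ProdMap
variable {𝕜 E F : Type*} [RCLike 𝕜] [NormedAddCommGroup E] [InnerProductSpace 𝕜 E]
  [NormedAddCommGroup F] [InnerProductSpace 𝕜 F]

noncomputable def l2ProdMap (A : E →L[𝕜] E) (B : F →L[𝕜] F) :
    WithLp 2 (E × F) →L[𝕜] WithLp 2 (E × F) :=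
  (WithLp.prodContinuousLinearEquiv 2 𝕜 E F).symm.toContinuousLinearMap ∘L A.prodMap B ∘L
    (WithLp.prodContinuousLinearEquiv 2 𝕜 E F).toContinuousLinearMap

variable (A : E →L[𝕜] E) (B : F →L[𝕜] F) (x : WithLp 2 (E × F))

@[simp] lemma l2ProdMap_fst : (l2ProdMap A B x).fst = A x.fst := rfl

@[simp] lemma l2ProdMap_snd : (l2ProdMap A B x).snd = B x.snd := rfl

lemma opNorm_l2ProdMap_le : ‖l2ProdMap A B‖ ≤ max ‖A‖ ‖B‖ := by
  refine (l2ProdMap A B).opNorm_le_bound (le_max_of_le_left (norm_nonneg A)) fun x => ?_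
  have hA : ‖A x.fst‖ ≤ max ‖A‖ ‖B‖ * ‖x.fst‖ :=
    (A.le_opNorm _).trans (by gcongr; exact le_max_left _ _)
  have hB : ‖B x.snd‖ ≤ max ‖A‖ ‖B‖ * ‖x.snd‖ :=
    (B.le_opNorm _).trans (by gcongr; exact le_max_right _ _)
  rw [← sq_le_sq₀ (norm_nonneg _) (by positivity), mul_pow, WithLp.prod_norm_sq_eq_of_L2,
    WithLp.prod_norm_sq_eq_of_L2, mul_add, ← mul_pow, ← mul_pow]
  exact add_le_add (pow_le_pow_left₀ (norm_nonneg _) hA 2) (pow_le_pow_left₀ (norm_nonneg _) hB 2)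

lemma opNorm_le_opNorm_l2ProdMap_left : ‖A‖ ≤ ‖l2ProdMap A B‖ := by
  refine A.opNorm_le_bound (norm_nonneg _) fun u => ?_
  have h := (l2ProdMap A B).le_opNorm (WithLp.toLp 2 (u, 0))
  simpa [WithLp.prod_norm_eq_of_L2] using h

lemma isSymmetric_l2ProdMap (hA : (A : E →ₗ[𝕜] E).IsSymmetric)
    (hB : (B : F →ₗ[𝕜] F).IsSymmetric) :
    (l2ProdMap A B : WithLp 2 (E × F) →ₗ[𝕜] WithLp 2 (E × F)).IsSymmetric := by
  intro x y
  simp only [ContinuousLinearMap.coe_coe, WithLp.prod_inner_apply]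
  exact congrArg₂ (· + ·) (hA x.fst y.fst) (hB x.snd y.snd)

end L2ProdMap

section Eta
variable {θ₀ : ℝ}

lemma one_half_sub_div_pi_nonneg (h1 : θ₀ ≤ π / 2) : 0 ≤ 1 / 2 - θ₀ / π := by
  rw [sub_nonneg, div_le_iff₀ pi_pos]
  linarith

lemma measurable_eta : Measurable (eta θ₀) :=
  Measurable.ite (measurableSet_singleton 0) measurable_const (by fun_prop)

lemma eta_neg (s : ℝ) : eta θ₀ (-s) = eta θ₀ s := by
  rcases eq_or_ne s 0 with rfl | hs
  · rw [neg_zero]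
  · simp only [eta, neg_eq_zero, hs, if_false, neg_mul, sinh_neg, mul_neg, neg_div_neg_eq]

lemma eta_le_of_pos (h0 : 0 ≤ θ₀) (h1 : θ₀ ≤ π / 2) {s : ℝ} (hs : 0 < s) :
    eta θ₀ s ≤ 1 / 2 - θ₀ / π := by
  have key := mul_sinh_le_mul_sinh (a := s * (π - 2 * θ₀)) (c := s * π)
    (mul_nonneg hs.le (by linarith)) (by nlinarith)
  have hsinh : 0 < sinh (s * π) := sinh_pos_iff.2 (by positivity)
  rw [eta, if_neg hs.ne', div_le_iff₀ (by positivity),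
    show (1 / 2 - θ₀ / π) * (2 * sinh (s * π)) = s * (π - 2 * θ₀) * sinh (s * π) / (s * π) by
      field_simp,
    le_div_iff₀ (by positivity)]
  linarith

lemma div_cosh_le_eta (h1 : θ₀ ≤ π / 2) {s : ℝ} (hs : 0 < s) :
    (1 / 2 - θ₀ / π) / cosh (π * s) ≤ eta θ₀ s := by
  rw [eta, if_neg hs.ne', mul_comm π s,
    show (1 / 2 - θ₀ / π) / cosh (s * π) = s * (π - 2 * θ₀) / (2 * (s * π * cosh (s * π))) by
      field_simp]
  have hα : 0 ≤ s * (π - 2 * θ₀) := mul_nonneg hs.le (by linarith)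
  gcongr
  · exact self_le_sinh_iff.2 hα
  · exact sinh_le_mul_cosh (by positivity)

lemma abs_eta_le (h0 : 0 ≤ θ₀) (h1 : θ₀ ≤ π / 2) (s : ℝ) : |eta θ₀ s| ≤ 1 / 2 - θ₀ / π := by
  have hb := one_half_sub_div_pi_nonneg h1
  wlog hs : 0 ≤ s generalizing s
  · simpa [eta_neg] using this (-s) (by linarith)
  rcases hs.eq_or_lt with rfl | hs
  · rw [eta, if_pos rfl, abs_of_nonneg hb]
  have hη : 0 ≤ eta θ₀ s := (div_nonneg hb (cosh_pos _).le).trans (div_cosh_le_eta h1 hs)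
  rw [abs_of_nonneg hη]
  exact eta_le_of_pos h0 h1 hs

lemma p1_pos {s : ℝ} (h0 : 0 < θ₀) (h1 : θ₀ < π) (hs : 0 < s) : 0 < p1 θ₀ s := by
  have hθ : 0 < π - θ₀ := sub_pos.2 h1
  rw [p1, if_neg hs.ne']
  have := sinh_pos_iff.2 (mul_pos hs h0)
  have := sinh_pos_iff.2 (mul_pos hs hθ)
  have := sinh_pos_iff.2 (mul_pos hs pi_pos)
  positivity

instance : SigmaFinite (mu1 θ₀) := by
  unfold mu1; infer_instance

lemma mu1_Ioo_pos {δ : ℝ} (h0 : 0 < θ₀) (h1 : θ₀ < π) (hδ : 0 < δ) :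
    0 < mu1 θ₀ (Ioo 0 δ) := by
  have hp1 : Measurable (p1 θ₀) :=
    Measurable.ite (measurableSet_singleton 0) measurable_const (by fun_prop)
  have hsupp : {s | ENNReal.ofReal (p1 θ₀ s) ≠ 0} ∩ Ioo 0 δ = Ioo 0 δ :=
    inter_eq_right.2 fun s hs => (ENNReal.ofReal_pos.2 (p1_pos h0 h1 hs.1)).ne'
  rw [pos_iff_ne_zero, mu1, Ne, withDensity_apply_eq_zero (by fun_prop), hsupp, Real.volume_Ioo]
  simpa using hδ

lemma le_opNorm_mulOp_eta (h0 : 0 < θ₀) (h1 : θ₀ < π / 2) {g : Lp ℂ ∞ (mu1 θ₀)}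
    (hg : g =ᵐ[mu1 θ₀] fun s => (eta θ₀ s : ℂ)) : 1 / 2 - θ₀ / π ≤ ‖mulOp g‖ := by
  have hlim : Tendsto (fun δ => (1 / 2 - θ₀ / π) / cosh (π * δ)) (𝓝[>] 0)
      (𝓝 (1 / 2 - θ₀ / π)) := by
    have h : Continuous fun δ => (1 / 2 - θ₀ / π) / cosh (π * δ) :=
      continuous_const.div (by fun_prop) fun δ => (cosh_pos _).ne'
    simpa using (h.tendsto 0).mono_left nhdsWithin_le_nhds
  refine le_of_tendsto hlim (eventually_nhdsWithin_of_forall fun δ hδ => ?_)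
  refine le_opNorm_mulOp measurableSet_Ioo (mu1_Ioo_pos h0 (by linarith [pi_pos]) hδ) ?_
  filter_upwards [hg] with s hs hsδ
  rw [hs, Complex.norm_real, Real.norm_eq_abs]
  calc (1 / 2 - θ₀ / π) / cosh (π * δ)
      ≤ (1 / 2 - θ₀ / π) / cosh (π * s) := by
        have hb := one_half_sub_div_pi_nonneg h1.le
        gcongr
        rw [cosh_le_cosh, abs_of_pos (mul_pos pi_pos hsδ.1), abs_of_pos (mul_pos pi_pos hδ)]
        exact mul_le_mul_of_nonneg_left hsδ.2.le pi_pos.le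
    _ ≤ eta θ₀ s := div_cosh_le_eta h1.le hsδ.1
    _ ≤ |eta θ₀ s| := le_abs_self _

end Eta

/-- `𝕂*(f₁,f₂) = (η f₁, −η f₂)` is a well-defined bounded linear operator on
`W*`, it is self-adjoint with respect to the `W*` inner product, and its operator norm
equals `b = 1/2 − θ₀/π`. -/
theorem statement9 (θ₀ : ℝ) (h0 : 0 < θ₀) (h1 : θ₀ < π / 2) :
    ∃ T : WStar θ₀ →L[ℂ] WStar θ₀, IsNPMult θ₀ T ∧
      (∀ f g : WStar θ₀, ⟪T f, g⟫ = ⟪f, T g⟫) ∧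
      ‖T‖ = 1 / 2 - θ₀ / π := by
  have hη := abs_eta_le h0.le h1.le
  obtain ⟨g₁, hg₁, hg₁b⟩ := exists_Lp_top_ofReal (μ := mu1 θ₀) measurable_eta hη
  obtain ⟨g₂, hg₂, hg₂b⟩ := exists_Lp_top_ofReal (μ := mu2 θ₀) measurable_eta.neg
    fun s => (abs_neg (eta θ₀ s)).trans_le (hη s)
  refine ⟨l2ProdMap (mulOp g₁) (mulOp g₂), fun f => ⟨?_, ?_⟩,
    isSymmetric_l2ProdMap _ _ (isSymmetric_mulOp hg₁) (isSymmetric_mulOp hg₂), le_antisymm ?_ ?_⟩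
  · filter_upwards [mulOp_apply_ae g₁ (comp1 f), hg₁] with s hs hg
    refine hs.trans ?_
    rw [hg]
  · filter_upwards [mulOp_apply_ae g₂ (comp2 f), hg₂] with s hs hg
    refine hs.trans ?_
    rw [hg, Pi.neg_apply, Complex.ofReal_neg]
  · exact (opNorm_l2ProdMap_le _ _).trans
      (max_le ((opNorm_mulOp_le g₁).trans hg₁b) ((opNorm_mulOp_le g₂).trans hg₂b))
  · exact (le_opNorm_mulOp_eta h0 h1 hg₁).trans (opNorm_le_opNorm_l2ProdMap_left _ _)
end
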